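/- arXiv:1705.09800 — 3 statements merged into one kernel-verified Lean document; each statement's English description precedes it below -/
import Mathlib

section
/- For a continuous, integrable random variable Z and α ∈ (0,1), the conditional value at risk CVaR_α(Z) = E[Z | Z ≥ VaR_α(Z)], where VaR_α(Z) = inf{c : P(Z ≤ c) ≥ α}, equals the minimum over c ∈ ℝ of c + (1/(1-α))·E[(Z - c)⁺] (Rockafellar–Uryasev representation). -/
/-!
For any level `q` with `p = P(Z ≥ q) > 0`, integrating the pointwise inequality
`(z - c)⁺ ≥ (z - q)⁺ + (q - c)·1{q ≤ z}` shows that `c ↦ c + E[(Z - c)⁺] / p` is minimised at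
`c = q`, where it equals `E[Z; Z ≥ q] / p`. When the distribution function `F` of `Z` is
continuous, the quantile `q = VaR_α(Z)` satisfies `F q = α`, so `p = 1 - α`.
-/

open MeasureTheory ProbabilityTheory Filter Set Topology

theorem apply_csInf_setOf_le_eq {F : ℝ → ℝ} {α : ℝ} (hF : Continuous F)
    (hbot : ∀ᶠ c in atBot, F c < α) (htop : ∃ c, α ≤ F c) :
    F (sInf {c | α ≤ F c}) = α := by
  set S := {c | α ≤ F c}
  have hS : BddBelow S := by
    obtain ⟨b, hb⟩ := eventually_atBot.1 hbot
    exact ⟨b, fun c hc => le_of_not_ge fun hcb => (hb c hcb).not_ge hc⟩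
  have hmem : sInf S ∈ S := (isClosed_le continuous_const hF).csInf_mem htop hS
  refine le_antisymm ?_ hmem
  have hleft : ∀ᶠ c in 𝓝[<] sInf S, F c ≤ α :=
    eventually_nhdsWithin_of_forall fun c hc => le_of_not_ge fun h => (csInf_le hS h).not_gt hc
  exact le_of_tendsto (hF.continuousAt.tendsto.mono_left nhdsWithin_le_nhds) hleft

theorem continuous_cdf (ν : Measure ℝ) [IsProbabilityMeasure ν] [NullSingletonClass ν] :
    Continuous (cdf ν) := by
  refine continuous_iff_continuousAt.2 fun x => ?_
  rw [(cdf ν).mono.continuousAt_iff_leftLim_eq_rightLim, StieltjesFunction.rightLim_eq]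
  have hjump := (cdf ν).measure_singleton x
  rw [measure_cdf, measure_singleton, eq_comm, ENNReal.ofReal_eq_zero] at hjump
  linarith [(cdf ν).mono.leftLim_le (le_refl x)]

theorem measureReal_Ici_eq_one_sub_cdf (ν : Measure ℝ) [IsProbabilityMeasure ν] {q : ℝ}
    (hq : ν {q} = 0) : ν.real (Ici q) = 1 - cdf ν q := by
  rw [cdf_eq_real, ← measureReal_congr (Ioi_ae_eq_Ici' hq), ← compl_Iic,
    measureReal_compl measurableSet_Iic, probReal_univ]

section PosPart

variable {Ω : Type*} [MeasurableSpace Ω] {μ : Measure Ω} [IsFiniteMeasure μ] {Z : Ω → ℝ}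

theorem max_sub_add_ite_le_max_sub (z q c : ℝ) :
    max (z - q) 0 + (if q ≤ z then q - c else 0) ≤ max (z - c) 0 := by
  split_ifs with h
  · rw [max_eq_left (sub_nonneg.2 h)]
    linarith [le_max_left (z - c) 0]
  · rw [max_eq_right (by linarith), add_zero]
    exact le_max_right _ _

theorem integral_max_sub_eq (hZ : Integrable Z μ) (q : ℝ) :
    ∫ ω, max (Z ω - q) 0 ∂μ = ∫ ω in {ω | q ≤ Z ω}, Z ω ∂μ - q * μ.real {ω | q ≤ Z ω} := by
  have hs := nullMeasurableSet_le aemeasurable_const hZ.aemeasurable (μ := μ) (f := fun _ => q)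
  have hind : (fun ω => max (Z ω - q) 0) = {ω | q ≤ Z ω}.indicator (fun ω => Z ω - q) := by
    ext ω
    by_cases h : q ≤ Z ω
    · simp [h]
    · simp [h, (not_le.1 h).le]
  rw [hind, integral_indicator₀ hs, integral_sub hZ.integrableOn (integrableOn_const),
    setIntegral_const, smul_eq_mul, mul_comm]

theorem integral_max_sub_add_le (hZ : Integrable Z μ) (q c : ℝ) :
    ∫ ω, max (Z ω - q) 0 ∂μ + (q - c) * μ.real {ω | q ≤ Z ω} ≤ ∫ ω, max (Z ω - c) 0 ∂μ := by
  have hs := nullMeasurableSet_le aemeasurable_const hZ.aemeasurable (μ := μ) (f := fun _ => q)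
  have hpos : ∀ c, Integrable (fun ω => max (Z ω - c) 0) μ :=
    fun c => (hZ.sub (integrable_const c)).pos_part
  have hind : Integrable ({ω | q ≤ Z ω}.indicator fun _ => q - c) μ :=
    (integrable_const _).indicator₀ hs
  calc ∫ ω, max (Z ω - q) 0 ∂μ + (q - c) * μ.real {ω | q ≤ Z ω}
      = ∫ ω, (max (Z ω - q) 0 + {ω | q ≤ Z ω}.indicator (fun _ => q - c) ω) ∂μ := by
        rw [integral_add (hpos q) hind, integral_indicator₀ hs, setIntegral_const, smul_eq_mul,
          mul_comm]
    _ ≤ ∫ ω, max (Z ω - c) 0 ∂μ := by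
        refine integral_mono ((hpos q).add hind) (hpos c) fun ω => ?_
        simpa [Set.indicator_apply] using max_sub_add_ite_le_max_sub (Z ω) q c

theorem isLeast_add_integral_max_sub (hZ : Integrable Z μ) {q : ℝ}
    (hq : 0 < μ.real {ω | q ≤ Z ω}) :
    IsLeast (range fun c => c + 1 / μ.real {ω | q ≤ Z ω} * ∫ ω, max (Z ω - c) 0 ∂μ)
      ((∫ ω in {ω | q ≤ Z ω}, Z ω ∂μ) / μ.real {ω | q ≤ Z ω}) := by
  set p := μ.real {ω | q ≤ Z ω}
  have hmin : q + 1 / p * ∫ ω, max (Z ω - q) 0 ∂μ = (∫ ω in {ω | q ≤ Z ω}, Z ω ∂μ) / p := by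
    rw [integral_max_sub_eq hZ q]
    field_simp
    ring
  refine ⟨⟨q, hmin⟩, ?_⟩
  rintro _ ⟨c, rfl⟩
  calc (∫ ω in {ω | q ≤ Z ω}, Z ω ∂μ) / p
      = c + 1 / p * (∫ ω, max (Z ω - q) 0 ∂μ + (q - c) * p) := by
        rw [← hmin]
        field_simp
        ring
    _ ≤ c + 1 / p * ∫ ω, max (Z ω - c) 0 ∂μ := by
        gcongr
        exact integral_max_sub_add_le hZ q c

end PosPart

/-- Rockafellar–Uryasev representation of CVaR: for a continuous, integrable
random variable `Z` and `α ∈ (0,1)`,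
`E[Z ∣ Z ≥ VaR_α(Z)] = min_c (c + (1/(1-α))·E[(Z-c)⁺])`. -/
theorem cvar_rockafellar_uryasev {Ω : Type*} [MeasurableSpace Ω] (μ : Measure Ω)
    [IsProbabilityMeasure μ] (Z : Ω → ℝ) (hZ : Integrable Z μ)
    (hcont : ∀ c : ℝ, μ {ω | Z ω = c} = 0)
    (α : ℝ) (hα : α ∈ Set.Ioo (0 : ℝ) 1)
    (VaR : ℝ) (hVaR : VaR = sInf {c : ℝ | α ≤ (μ {ω | Z ω ≤ c}).toReal}) :
    (∫ ω in {ω | VaR ≤ Z ω}, Z ω ∂μ) / (μ {ω | VaR ≤ Z ω}).toReal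
      = ⨅ c : ℝ, (c + (1 / (1 - α)) * ∫ ω, max (Z ω - c) 0 ∂μ) := by
  have hZm := hZ.aemeasurable
  set ν := μ.map Z
  have : IsProbabilityMeasure ν := Measure.isProbabilityMeasure_map hZm
  have hmap : ∀ s, MeasurableSet s → ν s = μ (Z ⁻¹' s) :=
    fun s hs => Measure.map_apply_of_aemeasurable hZm hs
  have : NullSingletonClass ν := ⟨fun c => (hmap _ (measurableSet_singleton c)).trans (hcont c)⟩
  have hset : {c : ℝ | α ≤ (μ {ω | Z ω ≤ c}).toReal} = {c | α ≤ cdf ν c} := by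
    ext c
    rw [mem_ofPred_eq, mem_ofPred_eq, cdf_eq_real, measureReal_def, hmap _ measurableSet_Iic]
    rfl
  have hcdf : cdf ν VaR = α := by
    rw [hVaR, hset]
    exact apply_csInf_setOf_le_eq (continuous_cdf ν)
      ((tendsto_cdf_atBot ν).eventually_lt_const hα.1)
      ((tendsto_cdf_atTop ν).eventually_const_le hα.2).exists
  have hp : μ.real {ω | VaR ≤ Z ω} = 1 - α := by
    rw [← hcdf, ← measureReal_Ici_eq_one_sub_cdf ν (measure_singleton VaR)]
    exact congrArg ENNReal.toReal (hmap _ measurableSet_Ici).symm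
  rw [← measureReal_def, ← (isLeast_add_integral_max_sub hZ (hp ▸ sub_pos.2 hα.2)).csInf_eq, hp]
  rfl
end

section
/- CVaR_α is subadditive: for integrable random variables Z₁, Z₂ on a common probability space, CVaR_α(Z₁ + Z₂) ≤ CVaR_α(Z₁) + CVaR_α(Z₂), where CVaR_α(Z) := inf_{c∈ℝ} [c + (1/(1-α))·E[(Z−c)⁺]]. -/
/-!
Write `F_Z(c) = c + k 𝔼[(Z - c)⁺]` with `k = 1/(1 - α) ≥ 1`. Since `(x + y)⁺ ≤ x⁺ + y⁺`,
`F_{Z₁+Z₂}(c₁ + c₂) ≤ F_{Z₁}(c₁) + F_{Z₂}(c₂)` for all `c₁, c₂`, and taking infima gives the claim.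
The infimum over `c` is a genuine one, not a junk value, because `F_Z ≥ 𝔼[Z]` when `k ≥ 1`.
-/

open MeasureTheory

section
variable {Ω : Type*} [MeasurableSpace Ω] {μ : Measure Ω}

lemma integral_le_add_mul_integral_max_sub_zero [IsProbabilityMeasure μ] {Z : Ω → ℝ}
    (hZ : Integrable Z μ) {k : ℝ} (hk : 1 ≤ k) (c : ℝ) :
    ∫ ω, Z ω ∂μ ≤ c + k * ∫ ω, max (Z ω - c) 0 ∂μ := by
  have hZc : Integrable (fun ω => Z ω - c) μ := hZ.sub (integrable_const c)
  have hmean : ∫ ω, Z ω ∂μ - c ≤ ∫ ω, max (Z ω - c) 0 ∂μ := by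
    calc ∫ ω, Z ω ∂μ - c = ∫ ω, Z ω - c ∂μ := by
          rw [integral_sub hZ (integrable_const c), integral_const, probReal_univ, one_smul]
      _ ≤ ∫ ω, max (Z ω - c) 0 ∂μ := integral_mono hZc hZc.pos_part fun ω => le_max_left _ _
  have hscale : ∫ ω, max (Z ω - c) 0 ∂μ ≤ k * ∫ ω, max (Z ω - c) 0 ∂μ :=
    le_mul_of_one_le_left (integral_nonneg fun ω => le_max_right _ _) hk
  linarith

lemma bddBelow_range_add_mul_integral_max_sub_zero [IsProbabilityMeasure μ] {Z : Ω → ℝ}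
    (hZ : Integrable Z μ) {k : ℝ} (hk : 1 ≤ k) :
    BddBelow (Set.range fun c : ℝ => c + k * ∫ ω, max (Z ω - c) 0 ∂μ) :=
  ⟨∫ ω, Z ω ∂μ, by
    rintro _ ⟨c, rfl⟩
    exact integral_le_add_mul_integral_max_sub_zero hZ hk c⟩

lemma integral_max_add_sub_add_zero_le [IsFiniteMeasure μ] {Z₁ Z₂ : Ω → ℝ} (hZ₁ : Integrable Z₁ μ)
    (hZ₂ : Integrable Z₂ μ) (c₁ c₂ : ℝ) :
    ∫ ω, max (Z₁ ω + Z₂ ω - (c₁ + c₂)) 0 ∂μ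
      ≤ ∫ ω, max (Z₁ ω - c₁) 0 ∂μ + ∫ ω, max (Z₂ ω - c₂) 0 ∂μ := by
  have hi₁ : Integrable (fun ω => max (Z₁ ω - c₁) 0) μ := (hZ₁.sub (integrable_const c₁)).pos_part
  have hi₂ : Integrable (fun ω => max (Z₂ ω - c₂) 0) μ := (hZ₂.sub (integrable_const c₂)).pos_part
  rw [← integral_add hi₁ hi₂]
  refine integral_mono_of_nonneg (.of_forall fun ω => le_max_right _ _) (hi₁.add hi₂)
    (.of_forall fun ω => ?_)
  calc max (Z₁ ω + Z₂ ω - (c₁ + c₂)) 0 = max ((Z₁ ω - c₁) + (Z₂ ω - c₂)) (0 + 0) := by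
        ring_nf
    _ ≤ max (Z₁ ω - c₁) 0 + max (Z₂ ω - c₂) 0 := max_add_add_le_max_add_max

lemma add_mul_integral_max_add_sub_add_zero_le [IsFiniteMeasure μ] {Z₁ Z₂ : Ω → ℝ} (hZ₁ : Integrable Z₁ μ)
    (hZ₂ : Integrable Z₂ μ) {k : ℝ} (hk : 0 ≤ k) (c₁ c₂ : ℝ) :
    (c₁ + c₂) + k * ∫ ω, max (Z₁ ω + Z₂ ω - (c₁ + c₂)) 0 ∂μ
      ≤ (c₁ + k * ∫ ω, max (Z₁ ω - c₁) 0 ∂μ) + (c₂ + k * ∫ ω, max (Z₂ ω - c₂) 0 ∂μ) := by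
  have := mul_le_mul_of_nonneg_left (integral_max_add_sub_add_zero_le hZ₁ hZ₂ c₁ c₂) hk
  linarith

end

/-- Subadditivity of CVaR: `CVaR_α(Z₁ + Z₂) ≤ CVaR_α(Z₁) + CVaR_α(Z₂)`. -/
theorem cvar_subadditive {Ω : Type*} [MeasurableSpace Ω] (μ : Measure Ω)
    [IsProbabilityMeasure μ] (Z₁ Z₂ : Ω → ℝ)
    (hZ₁ : Integrable Z₁ μ) (hZ₂ : Integrable Z₂ μ)
    (α : ℝ) (hα : α ∈ Set.Ioo (0 : ℝ) 1) :
    (⨅ c : ℝ, (c + (1 / (1 - α)) * ∫ ω, max ((Z₁ ω + Z₂ ω) - c) 0 ∂μ))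
      ≤ (⨅ c : ℝ, (c + (1 / (1 - α)) * ∫ ω, max (Z₁ ω - c) 0 ∂μ))
        + ⨅ c : ℝ, (c + (1 / (1 - α)) * ∫ ω, max (Z₂ ω - c) 0 ∂μ) := by
  have hk : 1 ≤ 1 / (1 - α) := by
    rw [le_div_iff₀ (by linarith [hα.2])]
    linarith [hα.1]
  have hbdd := bddBelow_range_add_mul_integral_max_sub_zero (hZ₁.add hZ₂) hk
  exact le_ciInf_add_ciInf fun c₁ c₂ =>
    (ciInf_le hbdd (c₁ + c₂)).trans
      (add_mul_integral_max_add_sub_add_zero_le hZ₁ hZ₂ (zero_le_one.trans hk) c₁ c₂)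
end

section
/- If b ↦ ℓ(b, X) is convex in b for every fixed outcome X, then the function (b, c) ↦ c + (1/(1-α))·E[(ℓ(b, X) - c)⁺] is jointly convex on B × ℝ, where B is a convex set. -/
open MeasureTheory Set

theorem ConvexOn.max_sub_snd_zero {𝕜 E : Type*} [Field 𝕜] [LinearOrder 𝕜] [IsStrictOrderedRing 𝕜]
    [AddCommGroup E] [Module 𝕜 E] {s : Set E} {f : E → 𝕜} (hf : ConvexOn 𝕜 s f) :
    ConvexOn 𝕜 (s ×ˢ univ) (fun p : E × 𝕜 => max (f p.1 - p.2) 0) := by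
  have hs : Convex 𝕜 (s ×ˢ (univ : Set 𝕜)) := hf.1.prod convex_univ
  have hfst : ConvexOn 𝕜 (s ×ˢ univ) (fun p : E × 𝕜 => f p.1) :=
    prod_univ ▸ hf.comp_linearMap (LinearMap.fst 𝕜 E 𝕜)
  exact (hfst.sub ((LinearMap.snd 𝕜 E 𝕜).concaveOn hs)).sup (convexOn_const 0 hs)

/-- If `b ↦ ℓ(b, x)` is convex for each `x`, then
`(b, c) ↦ c + (1/(1-α))·E[(ℓ(b,X) - c)⁺]` is jointly convex on `B × ℝ`. -/
theorem cvar_loss_jointly_convex {d : ℕ} {𝒳 : Type*} [MeasurableSpace 𝒳]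
    (μ : Measure 𝒳) [IsProbabilityMeasure μ]
    (B : Set (Fin d → ℝ)) (hB : Convex ℝ B)
    (ℓ : (Fin d → ℝ) → 𝒳 → ℝ)
    (hℓconv : ∀ x : 𝒳, ConvexOn ℝ B (fun b => ℓ b x))
    (hℓint : ∀ b ∈ B, Integrable (fun x => ℓ b x) μ)
    (α : ℝ) (hα : α ∈ Set.Ioo (0 : ℝ) 1) :
    ConvexOn ℝ (B ×ˢ (Set.univ : Set ℝ))
      (fun p : (Fin d → ℝ) × ℝ =>
        p.2 + (1 / (1 - α)) * ∫ x, max (ℓ p.1 x - p.2) 0 ∂μ) := by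
  have hBR : Convex ℝ (B ×ˢ (univ : Set ℝ)) := hB.prod convex_univ
  have hscale : 0 ≤ 1 / (1 - α) := one_div_nonneg.2 (sub_nonneg.2 hα.2.le)
  have hexcess : ConvexOn ℝ (B ×ˢ univ)
      (fun p : (Fin d → ℝ) × ℝ => ∫ x, max (ℓ p.1 x - p.2) 0 ∂μ) := by
    refine integral_convexOn_of_integrand_ae hBR
      (ae_of_all _ fun x => (hℓconv x).max_sub_snd_zero) ?_
    rintro ⟨b, c⟩ ⟨hb, -⟩
    exact ((hℓint b hb).sub (integrable_const c)).pos_part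
  exact ((LinearMap.snd ℝ _ ℝ).convexOn hBR).add (hexcess.smul hscale)
end
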